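/- arXiv:1805.01994 — 2 statements merged into one kernel-verified Lean document; each statement's English description precedes it below -/
import Mathlib

section
/- Suppose r : [0,∞) → (0,∞) is twice differentiable, ‖v(t)‖ → 0 as t → ∞, and r satisfies the differential inequality d²r/dt² ≥ −K1‖v‖ − (K2/2)r + K2·R with K1, K2, R > 0. Then r(t) does not converge to 0 as t → ∞. -/
/-! Once `r → 0` and `‖v‖ → 0`, the right-hand side of the differential inequality tends to
`K2 R > 0`, so `r''` is eventually bounded below by a positive constant. Integrating twice,
first `r' → ∞` and then `r → ∞`. -/

open Filter Set Topology

lemma tendsto_atTop_of_eventually_le_deriv {f f' : ℝ → ℝ} {c : ℝ} (hc : 0 < c)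
    (hf : ∀ᶠ t in atTop, HasDerivAt f (f' t) t) (hf' : ∀ᶠ t in atTop, c ≤ f' t) :
    Tendsto f atTop atTop := by
  obtain ⟨a, ha⟩ := (hf.and hf').exists_forall_of_atTop
  have hlin : ∀ t ∈ Ici a, a ≤ t → c * (t - a) ≤ f t - f a :=
    (convex_Ici a).mul_sub_le_image_sub_of_le_deriv
      (fun x hx => (ha x hx).1.continuousAt.continuousWithinAt)
      (fun x hx => (ha x (interior_subset hx)).1.differentiableAt.differentiableWithinAt)
      (fun x hx => (ha x (interior_subset hx)).1.deriv ▸ (ha x (interior_subset hx)).2)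
      a self_mem_Ici
  have hgrow : Tendsto (fun t => f a + c * (t - a)) atTop atTop :=
    tendsto_atTop_add_const_left _ _ ((tendsto_id.atTop_add tendsto_const_nhds).const_mul_atTop hc)
  refine tendsto_atTop_mono' _ ?_ hgrow
  filter_upwards [eventually_ge_atTop a] with t ht
  linarith [hlin t ht ht]

theorem r_not_tendsto_zero_general (K1 K2 R : ℝ) (hK2 : 0 < K2) (hR : 0 < R)
    (r r' r'' vn : ℝ → ℝ)
    (hr1 : ∀ t ≥ (0:ℝ), HasDerivAt r (r' t) t)
    (hr2 : ∀ t ≥ (0:ℝ), HasDerivAt r' (r'' t) t)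
    (hv : Filter.Tendsto vn Filter.atTop (nhds 0))
    (hineq : ∀ t ≥ (0:ℝ), r'' t ≥ -K1 * vn t - K2 / 2 * r t + K2 * R) :
    ¬ Filter.Tendsto r Filter.atTop (nhds 0) := by
  intro hr
  have hforcing : Tendsto (fun t => -K1 * vn t - K2 / 2 * r t + K2 * R) atTop (𝓝 (K2 * R)) := by
    simpa using ((hv.const_mul (-K1)).sub (hr.const_mul (K2 / 2))).add_const (K2 * R)
  have hr''_ge : ∀ᶠ t in atTop, K2 * R / 2 ≤ r'' t := by
    filter_upwards [hforcing.eventually (lt_mem_nhds (half_lt_self (mul_pos hK2 hR))),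
      eventually_ge_atTop 0] with t ht ht0
    exact ht.le.trans (hineq t ht0)
  have hr'_top : Tendsto r' atTop atTop :=
    tendsto_atTop_of_eventually_le_deriv (by positivity) ((eventually_ge_atTop 0).mono hr2) hr''_ge
  have hr_top : Tendsto r atTop atTop :=
    tendsto_atTop_of_eventually_le_deriv one_pos ((eventually_ge_atTop 0).mono hr1)
      (hr'_top.eventually_ge_atTop 1)
  exact not_tendsto_nhds_of_tendsto_atTop hr_top 0 hr

/-- If `r > 0` satisfies `r'' ≥ −K1‖v‖ − (K2/2)r + K2 R` with `‖v(t)‖ → 0`, then `r`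
does not converge to `0` at infinity. -/
theorem r_not_tendsto_zero (K1 K2 R : ℝ) (hK1 : 0 < K1) (hK2 : 0 < K2) (hR : 0 < R)
    (r r' r'' vn : ℝ → ℝ)
    (hrpos : ∀ t ≥ (0:ℝ), 0 < r t)
    (hr1 : ∀ t ≥ (0:ℝ), HasDerivAt r (r' t) t)
    (hr2 : ∀ t ≥ (0:ℝ), HasDerivAt r' (r'' t) t)
    (hvn : ∀ t ≥ (0:ℝ), 0 ≤ vn t)
    (hv : Filter.Tendsto vn Filter.atTop (nhds 0))
    (hineq : ∀ t ≥ (0:ℝ), r'' t ≥ -K1 * vn t - K2 / 2 * r t + K2 * R) :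
    ¬ Filter.Tendsto r Filter.atTop (nhds 0) :=
  r_not_tendsto_zero_general K1 K2 R hK2 hR r r' r'' vn hr1 hr2 hv hineq
end

section
/- Let N particles in R^d satisfy Σ_i x_i = 0 and suppose at time t₀ all particles coincide: x_i(t₀) = x_j(t₀) for all i,j. Then the potential energy E_p(t₀) = (K2/8N)·Σ_{i,j}(|x_i−x_j|−2R)² equals (K2·N/2)·R². Consequently, if the total energy E is non-increasing and E(T) < (K2·N/2)·R² at some time T, then no total collapse (all particles at one point) can occur at any time t ≥ T. -/
open Finset

lemma csb_collapse_energy {d N : ℕ} (hN : 0 < N) (K2 R : ℝ)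
    (y : Fin N → EuclideanSpace ℝ (Fin d)) (h : ∀ i j : Fin N, y i = y j) :
    K2 / (8 * (N : ℝ)) * ∑ i, ∑ j, (‖y i - y j‖ - 2 * R)^2
      = K2 * (N : ℝ) / 2 * R^2 := by
  have hterm : ∀ i j : Fin N, (‖y i - y j‖ - 2 * R)^2 = 4 * R^2 := by
    intro i j
    rw [h i j, sub_self, norm_zero]
    ring
  simp only [hterm, Finset.sum_const, Finset.card_univ, Fintype.card_fin, nsmul_eq_mul]
  have hN' : (N : ℝ) ≠ 0 := Nat.cast_ne_zero.mpr hN.ne'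
  field_simp
  ring

/-- Total collapse forces the potential energy to equal `(K2 N/2) R²`; hence if the total
energy is non-increasing and drops below this threshold at time `T`, no total collapse can
occur at any later time. -/
theorem csb_no_total_collapse {d N : ℕ} (hN : 0 < N)
    (K2 R T : ℝ) (hK2 : 0 < K2) (hR : 0 < R)
    (x : ℝ → Fin N → EuclideanSpace ℝ (Fin d)) (Ek : ℝ → ℝ)
    (hEk : ∀ t : ℝ, 0 ≤ Ek t)
    (hsum : ∀ t : ℝ, ∑ i, x t i = 0) :
    (∀ t₀ : ℝ, (∀ i j : Fin N, x t₀ i = x t₀ j) →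
      K2 / (8 * (N : ℝ)) * ∑ i, ∑ j, (‖x t₀ i - x t₀ j‖ - 2 * R)^2
        = K2 * (N : ℝ) / 2 * R^2) ∧
    (AntitoneOn (fun t => Ek t
        + K2 / (8 * (N : ℝ)) * ∑ i, ∑ j, (‖x t i - x t j‖ - 2 * R)^2) (Set.Ici T) →
      Ek T + K2 / (8 * (N : ℝ)) * ∑ i, ∑ j, (‖x T i - x T j‖ - 2 * R)^2
        < K2 * (N : ℝ) / 2 * R^2 →
      ∀ t ≥ T, ¬ (∀ i j : Fin N, x t i = x t j)) := by
  constructor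
  · intro t₀ h
    exact csb_collapse_energy hN K2 R (x t₀) h
  · intro hanti hT t ht hcol
    have h1 : Ek t + K2 / (8 * (N : ℝ)) * ∑ i, ∑ j, (‖x t i - x t j‖ - 2 * R)^2
        ≤ Ek T + K2 / (8 * (N : ℝ)) * ∑ i, ∑ j, (‖x T i - x T j‖ - 2 * R)^2 :=
      hanti (Set.self_mem_Ici) (Set.mem_Ici.mpr ht) ht
    have h2 := csb_collapse_energy hN K2 R (x t) hcol
    have h3 : K2 * (N : ℝ) / 2 * R^2
        ≤ Ek t + K2 / (8 * (N : ℝ)) * ∑ i, ∑ j, (‖x t i - x t j‖ - 2 * R)^2 := by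
      rw [← h2]; linarith [hEk t]
    linarith
end
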